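/- The natural extension F̂ of the octagon Farey map is, up to null sets, a bijection of Σ × Σ₀ onto itself: there exist Lebesgue-null sets N₁, N₂ contained in R = (-∞, 1+√2) × (1+√2, ∞) such that F̂ restricted to R \ N₁ is a bijection onto R \ N₂. -/

import Mathlib

/-!
Each `νᵢ` maps the open sector `Σᵢ` onto `Σ₀` and `Σ₀` onto a sector `Σ_{σ i}`, where `σ` swaps
`2` and `6`, while `γ` is the reflection `u ↦ 2(1+√2) - u`, which exchanges `Σ` and `Σ₀`. Since `γ`
and `νᵢ` compose as Möbius maps away from poles, `F̂` maps `Σᵢ × Σ₀` bijectively onto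
`Σ × γ(Σ_{σ i})`. The sectors are disjoint and cover `Σ` up to six endpoints, so the pieces
`γ(Σ_{σ i})` are disjoint and cover `Σ₀` up to six points.
-/

open MeasureTheory Set

noncomputable section

/-- The linear fractional transformation of `ℝ` induced by a 2×2 real matrix,
with the convention that the value is `0` when the denominator vanishes. -/
def mob (M : Matrix (Fin 2) (Fin 2) ℝ) (u : ℝ) : ℝ :=
  (M 0 0 * u + M 0 1) / (M 1 0 * u + M 1 1)

/-- The matrix `γ = [[-1, 2+2√2],[0,1]]`. -/
def gam : Matrix (Fin 2) (Fin 2) ℝ := !![-1, 2 + 2 * Real.sqrt 2; 0, 1]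

/-- The isometries `ν₁, …, ν₇` of the octagon. -/
def nu : ℕ → Matrix (Fin 2) (Fin 2) ℝ
  | 1 => (Real.sqrt 2)⁻¹ • !![1, 1; 1, -1]
  | 2 => (Real.sqrt 2)⁻¹ • !![1, 1; -1, 1]
  | 3 => !![0, 1; 1, 0]
  | 4 => !![0, 1; -1, 0]
  | 5 => (Real.sqrt 2)⁻¹ • !![-1, 1; 1, 1]
  | 6 => (Real.sqrt 2)⁻¹ • !![-1, 1; -1, -1]
  | 7 => !![-1, 0; 0, 1]
  | _ => 1

/-- The index `i` of the sector `Σᵢ` (in inverse-slope coordinates) containing `u`: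
`Σ₀ = (1+√2, ∞)`, `Σ₁ = (1, 1+√2]`, `Σ₂ = (√2-1, 1]`, `Σ₃ = (0, √2-1]`, `Σ₄ = (1-√2, 0]`,
`Σ₅ = (-1, 1-√2]`, `Σ₆ = (-1-√2, -1]`, `Σ₇ = (-∞, -1-√2]`. -/
def sectorIndex (u : ℝ) : ℕ :=
  if 1 + Real.sqrt 2 < u then 0
  else if 1 < u then 1
  else if Real.sqrt 2 - 1 < u then 2
  else if 0 < u then 3
  else if 1 - Real.sqrt 2 < u then 4
  else if -1 < u then 5
  else if -(1 + Real.sqrt 2) < u then 6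
  else 7

/-- The octagon Farey map in inverse-slope coordinates: `F(u) = (γ·νᵢ)[u]` for `u ∈ Σᵢ`
(`i = 1,…,7`), and `F(u) = u` for `u ∈ Σ₀`. -/
def F (u : ℝ) : ℝ :=
  if sectorIndex u = 0 then u else mob (gam * nu (sectorIndex u)) u

/-- The natural extension of the octagon Farey map:
`F̂(u,v) = ((γ·νᵢ)[u], (γ·νᵢ)[v])` for `u ∈ Σᵢ` (`i = 1,…,7`), and `F̂(u,v) = (u,v)`
for `u ∈ Σ₀`. -/
def Fhat (p : ℝ × ℝ) : ℝ × ℝ :=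
  if sectorIndex p.1 = 0 then p
  else (mob (gam * nu (sectorIndex p.1)) p.1, mob (gam * nu (sectorIndex p.1)) p.2)

local notation "ρ" => 1 + Real.sqrt 2

lemma mob_of (a b c d x : ℝ) : mob !![a, b; c, d] x = (a * x + b) / (c * x + d) := rfl

lemma mob_smul {c : ℝ} (hc : c ≠ 0) (M : Matrix (Fin 2) (Fin 2) ℝ) : mob (c • M) = mob M := by
  ext x
  simp only [mob, Matrix.smul_apply, smul_eq_mul, mul_assoc, ← mul_add]
  exact mul_div_mul_left _ _ hc

lemma mob_neg (M : Matrix (Fin 2) (Fin 2) ℝ) : mob (-M) = mob M := by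
  ext x
  simp only [mob, Matrix.neg_apply, neg_mul, ← neg_add, neg_div_neg_eq]

lemma mob_one : mob 1 = id := by
  ext x; simp [mob]

/-- The hypothesis excludes the pole of `N`, where `mob N x` takes the junk value `0`. -/
lemma mob_mul_of_ne_zero {M N : Matrix (Fin 2) (Fin 2) ℝ} {x : ℝ} (hx : mob N x ≠ 0) :
    mob (M * N) x = mob M (mob N x) := by
  have hq : N 1 0 * x + N 1 1 ≠ 0 := fun h => hx (by simp [mob, h])
  simp only [mob, Matrix.mul_apply, Fin.sum_univ_two]
  field_simp
  ring

lemma mob_gam (x : ℝ) : mob gam x = 2 * ρ - x := by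
  rw [gam, mob_of]; ring

lemma mob_mob_of_mul {M N : Matrix (Fin 2) (Fin 2) ℝ} (hNM : N * M = 1 ∨ N * M = -1) {x : ℝ}
    (hx : mob M x ≠ 0) : mob N (mob M x) = x := by
  rw [← mob_mul_of_ne_zero hx]
  rcases hNM with h | h <;> simp [h, mob_neg, mob_one]

lemma mul_eq_one_or_neg_one_comm {M N : Matrix (Fin 2) (Fin 2) ℝ} (h : N * M = 1 ∨ N * M = -1) :
    M * N = 1 ∨ M * N = -1 := by
  rcases h with h | h
  · exact .inl (mul_eq_one_comm.mp h)
  · refine .inr (neg_eq_iff_eq_neg.mp ?_)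
    rw [← mul_neg, mul_eq_one_comm, neg_mul, h, neg_neg]

lemma bijOn_mob {M N : Matrix (Fin 2) (Fin 2) ℝ} {s t : Set ℝ} (hNM : N * M = 1 ∨ N * M = -1)
    (hst : MapsTo (mob M) s t) (hts : MapsTo (mob N) t s) (hs : (0 : ℝ) ∉ s) (ht : (0 : ℝ) ∉ t) :
    BijOn (mob M) s t :=
  InvOn.bijOn
    ⟨fun _ hx => mob_mob_of_mul hNM (ne_of_mem_of_not_mem (hst hx) ht),
     fun _ hy => mob_mob_of_mul (mul_eq_one_or_neg_one_comm hNM) (ne_of_mem_of_not_mem (hts hy) hs)⟩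
    hst hts

lemma bijOn_mob_mul {M N : Matrix (Fin 2) (Fin 2) ℝ} {s t u : Set ℝ} (hN : BijOn (mob N) s t)
    (hM : BijOn (mob M) t u) (ht : (0 : ℝ) ∉ t) : BijOn (mob (M * N)) s u :=
  (hM.comp hN).congr fun _ hx => (mob_mul_of_ne_zero (ne_of_mem_of_not_mem (hN.mapsTo hx) ht)).symm

lemma mob_gam_involutive : Function.Involutive (mob gam) := fun x => by
  rw [mob_gam, mob_gam]; ring

lemma bijOn_mob_gam : BijOn (mob gam) (Ioi ρ) (Iio ρ) :=
  InvOn.bijOn ⟨fun x _ => mob_gam_involutive x, fun x _ => mob_gam_involutive x⟩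
    (fun x hx => by simp only [mem_Ioi, mem_Iio, mob_gam] at *; linarith)
    (fun x hx => by simp only [mem_Ioi, mem_Iio, mob_gam] at *; linarith)

/-- The sector `Σᵢ` with its endpoints removed. -/
def sector : ℕ → Set ℝ
  | 1 => Ioo 1 ρ
  | 2 => Ioo (Real.sqrt 2 - 1) 1
  | 3 => Ioo 0 (Real.sqrt 2 - 1)
  | 4 => Ioo (1 - Real.sqrt 2) 0
  | 5 => Ioo (-1) (1 - Real.sqrt 2)
  | 6 => Ioo (-ρ) (-1)
  | 7 => Iio (-ρ)
  | _ => ∅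

lemma sectorIndex_of_mem_sector {i : ℕ} {x : ℝ} (hx : x ∈ sector i) : sectorIndex x = i := by
  have := Real.one_lt_sqrt_two
  have := Real.sqrt_two_lt_three_halves
  rcases i with _ | _ | _ | _ | _ | _ | _ | _ | i <;>
    simp only [sector, mem_Ioo, mem_Iio, mem_empty_iff_false] at hx <;>
    unfold sectorIndex <;> split_ifs <;> first | rfl | (exfalso; linarith)

lemma sector_subset_Iio (i : ℕ) : sector i ⊆ Iio ρ := by
  have := Real.one_lt_sqrt_two
  intro x hx
  rcases i with _ | _ | _ | _ | _ | _ | _ | _ | i <;>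
    simp only [sector, mem_Ioo, mem_Iio, mem_empty_iff_false] at hx ⊢ <;> linarith

lemma zero_notMem_sector (i : ℕ) : (0 : ℝ) ∉ sector i := fun h => by
  have := Real.one_lt_sqrt_two
  rcases i with _ | _ | _ | _ | _ | _ | _ | _ | i <;>
    simp only [sector, mem_Ioo, mem_Iio, mem_empty_iff_false] at h <;> linarith

lemma Iio_diff_iUnion_sector_subset :
    Iio ρ \ ⋃ i, sector i ⊆ {1, Real.sqrt 2 - 1, 0, 1 - Real.sqrt 2, -1, -ρ} := by
  rintro x ⟨hx, hU⟩
  have hx' := mt (mem_iUnion_of_mem (sectorIndex x)) hU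
  simp only [mem_Iio] at hx
  simp only [mem_insert_iff, mem_singleton_iff]
  unfold sectorIndex at hx'
  split_ifs at hx' <;> simp only [sector, mem_Ioo, mem_Iio, not_and, not_lt] at hx'
  all_goals
    try have := hx' (by assumption)
    repeat' first | exact Or.inl (by linarith) | apply Or.inr
  linarith

/-- `νᵢ` maps `Σ₀` onto `Σ_{partner i}`, and `ν_{partner i}` inverts `νᵢ`. -/
def partner : Equiv.Perm ℕ := Equiv.swap 2 6

lemma partner_mem_Icc {i : ℕ} (hi : i ∈ Icc 1 7) : partner i ∈ Icc 1 7 := by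
  obtain ⟨hi1, hi7⟩ := hi
  simp only [mem_Icc]
  interval_cases i <;> simp [partner, Equiv.swap_apply_def]

lemma mapsTo_nu {i : ℕ} (hi : i ∈ Icc 1 7) :
    MapsTo (mob (nu i)) (sector i) (Ioi ρ) ∧ MapsTo (mob (nu i)) (Ioi ρ) (sector (partner i)) := by
  have := Real.one_lt_sqrt_two
  have := Real.sq_sqrt (show (0 : ℝ) ≤ 2 by norm_num)
  have hs : Real.sqrt 2 ≠ 0 := by positivity
  obtain ⟨hi1, hi7⟩ := hi
  interval_cases i <;> refine ⟨fun x hx => ?_, fun x hx => ?_⟩ <;>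
    simp only [nu, mob_smul (inv_ne_zero hs), mob_of, partner, Equiv.swap_apply_def,
      Nat.reduceEqDiff, ↓reduceIte, sector, mem_Ioo, mem_Iio, mem_Ioi] at hx ⊢
  all_goals
    (try constructor) <;>
    (first
      | rw [lt_div_iff₀ (by linarith)] | rw [div_lt_iff₀ (by linarith)]
      | rw [lt_div_iff_of_neg (by linarith)] | rw [div_lt_iff_of_neg (by linarith)]) <;>
    nlinarith

lemma nu_partner_mul_nu {i : ℕ} (hi : i ∈ Icc 1 7) :
    nu (partner i) * nu i = 1 ∨ nu (partner i) * nu i = -1 := by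
  have hs : (Real.sqrt 2)⁻¹ * (Real.sqrt 2)⁻¹ = 1 / 2 := by
    rw [← mul_inv, Real.mul_self_sqrt (by norm_num), one_div]
  obtain ⟨hi1, hi7⟩ := hi
  interval_cases i <;>
    simp only [nu, partner, Equiv.swap_apply_def, Nat.reduceEqDiff, ↓reduceIte, smul_mul_smul, hs,
      Matrix.mul_fin_two, Matrix.one_fin_two] <;> norm_num

lemma zero_notMem_Ioi_one_add_sqrt_two : (0 : ℝ) ∉ Ioi ρ :=
  notMem_Ioi.2 (by positivity)

lemma image_mob_gam_Iio : mob gam '' Iio ρ = Ioi ρ := by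
  rw [← bijOn_mob_gam.image_eq, image_image]
  simp only [mob_gam_involutive _, image_id']

lemma bijOn_nu_sector {i : ℕ} (hi : i ∈ Icc 1 7) : BijOn (mob (nu i)) (sector i) (Ioi ρ) := by
  have h := (mapsTo_nu (partner_mem_Icc hi)).2
  rw [partner, Equiv.swap_apply_self] at h
  exact bijOn_mob (nu_partner_mul_nu hi) (mapsTo_nu hi).1 h (zero_notMem_sector i)
    zero_notMem_Ioi_one_add_sqrt_two

lemma bijOn_nu_Ioi {i : ℕ} (hi : i ∈ Icc 1 7) :
    BijOn (mob (nu i)) (Ioi ρ) (sector (partner i)) :=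
  bijOn_mob (nu_partner_mul_nu hi) (mapsTo_nu hi).2 (mapsTo_nu (partner_mem_Icc hi)).1
    zero_notMem_Ioi_one_add_sqrt_two (zero_notMem_sector _)

lemma Fhat_of_mem_sector {i : ℕ} {p : ℝ × ℝ} (hp : p.1 ∈ sector i) :
    Fhat p = (mob (gam * nu i) p.1, mob (gam * nu i) p.2) := by
  have hi : i ≠ 0 := by rintro rfl; exact hp
  rw [Fhat, sectorIndex_of_mem_sector hp, if_neg hi]

lemma bijOn_Fhat_sector (i : ℕ) :
    BijOn Fhat (sector i ×ˢ Ioi ρ) (Iio ρ ×ˢ (mob gam '' sector (partner i))) := by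
  by_cases hi : i ∈ Icc 1 7
  · have h₁ : BijOn (mob (gam * nu i)) (sector i) (Iio ρ) :=
      bijOn_mob_mul (bijOn_nu_sector hi) bijOn_mob_gam zero_notMem_Ioi_one_add_sqrt_two
    have h₂ : BijOn (mob (gam * nu i)) (Ioi ρ) (mob gam '' sector (partner i)) :=
      bijOn_mob_mul (bijOn_nu_Ioi hi) mob_gam_involutive.injective.injOn.bijOn_image
        (zero_notMem_sector _)
    exact (h₁.prodMap h₂).congr fun p hp => (Fhat_of_mem_sector hp.1).symm
  · have hpartner : partner i = i := by
      simp only [mem_Icc, not_and_or, not_le] at hi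
      exact Equiv.swap_apply_of_ne_of_ne (by omega) (by omega)
    have hempty : sector i = ∅ := by
      simp only [mem_Icc] at hi
      rcases i with _ | _ | _ | _ | _ | _ | _ | _ | i <;> first | rfl | omega
    simp [hpartner, hempty]

lemma injOn_Fhat_iUnion_sector : InjOn Fhat (⋃ i, sector i ×ˢ Ioi ρ) := by
  intro p hp q hq hpq
  obtain ⟨i, hpi⟩ := mem_iUnion.1 hp
  obtain ⟨j, hqj⟩ := mem_iUnion.1 hq
  obtain ⟨a, ha, hpa⟩ := ((bijOn_Fhat_sector i).mapsTo hpi).2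
  obtain ⟨b, hb, hqb⟩ := ((bijOn_Fhat_sector j).mapsTo hqj).2
  obtain rfl : a = b := mob_gam_involutive.injective (hpa.trans (hpq ▸ hqb.symm))
  obtain rfl : i = j :=
    partner.injective ((sectorIndex_of_mem_sector ha).symm.trans (sectorIndex_of_mem_sector hb))
  exact (bijOn_Fhat_sector i).injOn hpi hqj hpq

/-- Up to null sets, the natural extension `F̂` of the octagon Farey map is a bijection
of `Σ × Σ₀ = (-∞, 1+√2) × (1+√2, ∞)` onto itself. -/
theorem Fhat_bijective_mod_null :
    ∃ N₁ N₂ : Set (ℝ × ℝ),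
      N₁ ⊆ Set.Iio (1 + Real.sqrt 2) ×ˢ Set.Ioi (1 + Real.sqrt 2) ∧
      N₂ ⊆ Set.Iio (1 + Real.sqrt 2) ×ˢ Set.Ioi (1 + Real.sqrt 2) ∧
      volume N₁ = 0 ∧ volume N₂ = 0 ∧
      Set.BijOn Fhat
        ((Set.Iio (1 + Real.sqrt 2) ×ˢ Set.Ioi (1 + Real.sqrt 2)) \ N₁)
        ((Set.Iio (1 + Real.sqrt 2) ×ˢ Set.Ioi (1 + Real.sqrt 2)) \ N₂) := by
  set U := ⋃ i, sector i
  have hU : U ⊆ Iio ρ := iUnion_subset sector_subset_Iio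
  have hE : (Iio ρ \ U).Countable :=
    (Set.toFinite _).countable.mono Iio_diff_iUnion_sector_subset
  have hγU : mob gam '' (Iio ρ \ U) = Ioi ρ \ mob gam '' U := by
    rw [image_sdiff mob_gam_involutive.injective, image_mob_gam_Iio]
  refine ⟨(Iio ρ \ U) ×ˢ Ioi ρ, Iio ρ ×ˢ (mob gam '' (Iio ρ \ U)),
    prod_mono sdiff_subset subset_rfl, prod_mono subset_rfl (hγU ▸ sdiff_subset), ?_, ?_, ?_⟩
  · rw [Measure.volume_eq_prod, Measure.prod_prod, hE.measure_zero, zero_mul]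
  · rw [Measure.volume_eq_prod, Measure.prod_prod, (hE.image _).measure_zero, mul_zero]
  · have hdom : (Iio ρ ×ˢ Ioi ρ) \ ((Iio ρ \ U) ×ˢ Ioi ρ) = ⋃ i, sector i ×ˢ Ioi ρ := by
      rw [prod_sdiff_prod, sdiff_self, prod_empty, empty_union, sdiff_sdiff_cancel_left hU,
        iUnion_prod_const]
    have hcod : (Iio ρ ×ˢ Ioi ρ) \ (Iio ρ ×ˢ (mob gam '' (Iio ρ \ U))) =
        ⋃ i, Iio ρ ×ˢ (mob gam '' sector (partner i)) := by
      rw [prod_sdiff_prod, sdiff_self, empty_prod, union_empty, hγU,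
        sdiff_sdiff_cancel_left (image_mob_gam_Iio ▸ image_mono hU), ← prod_iUnion, ← image_iUnion,
        partner.surjective.iUnion_comp]
    rw [hdom, hcod]
    exact bijOn_iUnion bijOn_Fhat_sector injOn_Fhat_iUnion_sector
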